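/- The polynomial interpretation of application p_app (f, x) := plus_ty_nat (f x, lvf x) from ⟦A1 ⟶ A2⟧ × ⟦A1⟧ to ⟦A2⟧ satisfies the three required strong-monotonicity/compatibility conditions: (1) if f > f' pointwise then p_app (f, x) > p_app (f', x); (2) if x > x' then p_app (f, x) > p_app (f, x'); (3) p_app (f, x) ≥ f x. -/

import Mathlib

structure CompatRel where
  carrier : Type
  gt : carrier → carrier → Prop
  ge : carrier → carrier → Prop

structure isCompatRel (X : CompatRel) : Prop where
  ge_trans : ∀ {x y z : X.carrier}, X.ge x y → X.ge y z → X.ge x z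
  ge_refl : ∀ x : X.carrier, X.ge x x
  compat : ∀ {x y : X.carrier}, X.gt x y → X.ge x y
  ge_gt : ∀ {x y z : X.carrier}, X.ge x y → X.gt y z → X.gt x z
  gt_ge : ∀ {x y z : X.carrier}, X.gt x y → X.ge y z → X.gt x z

structure weakMonotoneMap (X Y : CompatRel) where
  f : X.carrier → Y.carrier
  mono : ∀ x y : X.carrier, X.ge x y → Y.ge (f x) (f y)

def funCompatRel (X Y : CompatRel) : CompatRel where
  carrier := weakMonotoneMap X Y
  gt f g := ∀ x : X.carrier, Y.gt (f.f x) (g.f x)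
  ge f g := ∀ x : X.carrier, Y.ge (f.f x) (g.f x)

def prodCompatRel (X Y : CompatRel) : CompatRel where
  carrier := X.carrier × Y.carrier
  gt x y := X.gt x.1 y.1 ∧ Y.gt x.2 y.2
  ge x y := X.ge x.1 y.1 ∧ Y.ge x.2 y.2

inductive isWf {X : Type} (R : X → X → Prop) : X → Prop
  | acc : ∀ {x : X}, (∀ y : X, R x y → isWf R y) → isWf R x

def Wf {X : Type} (R : X → X → Prop) : Prop := ∀ x : X, isWf R x

inductive Ty (B : Type) : Type
  | Base : B → Ty B
  | Fun : Ty B → Ty B → Ty B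

def natCompatRel : CompatRel where
  carrier := ℕ
  gt x y := x > y
  ge x y := x ≥ y

def semTy {B : Type} : Ty B → CompatRel
  | .Base _ => natCompatRel
  | .Fun A1 A2 => funCompatRel (semTy A1) (semTy A2)

def semTy_ge_refl {B : Type} : (A : Ty B) → ∀ x : (semTy A).carrier, (semTy A).ge x x
  | .Base _, x => Nat.le_refl x
  | .Fun _ A2, f => fun x => semTy_ge_refl A2 (f.f x)

def minEl {B : Type} : (A : Ty B) → (semTy A).carrier
  | .Base _ => (0 : ℕ)
  | .Fun _ A2 => ⟨fun _ => minEl A2, fun _ _ _ => semTy_ge_refl A2 (minEl A2)⟩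

def lvf {B : Type} : (A : Ty B) → (semTy A).carrier → ℕ
  | .Base _, n => n
  | .Fun A1 A2, f => lvf A2 (f.f (minEl A1))

def plusTyNatAux {B : Type} :
    (A : Ty B) → { p : (semTy A).carrier → ℕ → (semTy A).carrier //
      ∀ (x y : (semTy A).carrier) (n : ℕ),
        (semTy A).ge x y → (semTy A).ge (p x n) (p y n) }
  | .Base _ =>
      ⟨fun x n => Nat.add x n, fun x y n h => Nat.add_le_add_right h n⟩
  | .Fun A1 A2 =>
      let q := plusTyNatAux A2
      ⟨fun f n => ⟨fun x => q.1 (f.f x) n, fun x y h => q.2 _ _ n (f.mono x y h)⟩,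
        fun f g n h x => q.2 _ _ n (h x)⟩

def plusTyNat {B : Type} (A : Ty B) (x : (semTy A).carrier) (n : ℕ) :
    (semTy A).carrier := (plusTyNatAux A).1 x n

def pApp {B : Type} (A1 A2 : Ty B)
    (f : (semTy (Ty.Fun A1 A2)).carrier) (x : (semTy A1).carrier) :
    (semTy A2).carrier :=
  plusTyNat A2 (f.f x) (lvf A1 x)

/-! Condition (2) is the only one with content: `f` is weakly monotone, so `f x ≥ f x'`, and the
amount `lvf x` added by `plusTyNat` strictly exceeds `lvf x'`, because `lvf` only evaluates at the
arguments `minEl`, where a pointwise strict decrease is in particular strict. -/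

section
variable {B : Type}

theorem semTy_ge_of_gt : ∀ (A : Ty B) {x y : (semTy A).carrier},
    (semTy A).gt x y → (semTy A).ge x y
  | .Base _, _, _, h => Nat.le_of_lt h
  | .Fun _ A2, _, _, h => fun z => semTy_ge_of_gt A2 (h z)

theorem plusTyNat_gt_of_ge_of_lt : ∀ (A : Ty B) {x y : (semTy A).carrier} {n m : ℕ},
    (semTy A).ge x y → m < n → (semTy A).gt (plusTyNat A x n) (plusTyNat A y m)
  | .Base _, _, _, _, _, h, hnm => Nat.add_lt_add_of_le_of_lt h hnm
  | .Fun _ A2, _, _, _, _, h, hnm => fun z => plusTyNat_gt_of_ge_of_lt A2 (h z) hnm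

theorem plusTyNat_gt_of_gt : ∀ (A : Ty B) {x y : (semTy A).carrier} (n : ℕ),
    (semTy A).gt x y → (semTy A).gt (plusTyNat A x n) (plusTyNat A y n)
  | .Base _, _, _, n, h => Nat.add_lt_add_right h n
  | .Fun _ A2, _, _, n, h => fun z => plusTyNat_gt_of_gt A2 n (h z)

theorem plusTyNat_ge_self : ∀ (A : Ty B) (x : (semTy A).carrier) (n : ℕ),
    (semTy A).ge (plusTyNat A x n) x
  | .Base _, x, n => Nat.le_add_right x n
  | .Fun _ A2, f, n => fun z => plusTyNat_ge_self A2 (f.f z) n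

theorem lvf_lt_lvf_of_gt : ∀ (A : Ty B) {y y' : (semTy A).carrier},
    (semTy A).gt y y' → lvf A y' < lvf A y
  | .Base _, _, _, h => h
  | .Fun A1 A2, _, _, h => lvf_lt_lvf_of_gt A2 (h (minEl A1))

end

theorem pApp_strongly_monotone {B : Type} :
    (∀ (A1 A2 : Ty B) (f f' : (semTy (Ty.Fun A1 A2)).carrier)
        (x : (semTy A1).carrier),
        (semTy (Ty.Fun A1 A2)).gt f f' →
        (semTy A2).gt (pApp A1 A2 f x) (pApp A1 A2 f' x)) ∧
    (∀ (A1 A2 : Ty B) (f : (semTy (Ty.Fun A1 A2)).carrier)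
        (x x' : (semTy A1).carrier),
        (semTy A1).gt x x' →
        (semTy A2).gt (pApp A1 A2 f x) (pApp A1 A2 f x')) ∧
    (∀ (A1 A2 : Ty B) (f : (semTy (Ty.Fun A1 A2)).carrier)
        (x : (semTy A1).carrier),
        (semTy A2).ge (pApp A1 A2 f x) (f.f x)) ∧
    (∀ (A : Ty B) (y y' : (semTy A).carrier),
        (semTy A).gt y y' → lvf A y > lvf A y') :=
  ⟨fun _ A2 _ _ x hf => plusTyNat_gt_of_gt A2 _ (hf x),
    fun A1 A2 f x x' hx =>
      plusTyNat_gt_of_ge_of_lt A2 (f.mono x x' (semTy_ge_of_gt A1 hx)) (lvf_lt_lvf_of_gt A1 hx),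
    fun _ A2 f x => plusTyNat_ge_self A2 (f.f x) _,
    fun A _ _ => lvf_lt_lvf_of_gt A⟩
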